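/- arXiv:2603.26223 — 4 statements merged into one kernel-verified Lean document; each statement's English description precedes it below -/
import Mathlib

section
/- For any positive integers n, d with r an integer, r < n, n ≡ r (mod d), if the rational function (q^r;q^d)_{(n-r)/d} / (q^d;q^d)_{(n-r)/d} is written as A(q)/B(q) with A, B coprime polynomials in q, then B(q) is coprime to 1 - q^n. -/
open Finset Polynomial

/-- The indeterminate `q`, as a rational function over `ℚ`. -/
noncomputable def q : RatFunc ℚ := RatFunc.X

/-- The q-shifted factorial `(q^r; q^d)_m = ∏_{j=0}^{m-1} (1 - q^{r+dj})`. -/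
noncomputable def qPoch (r d : ℤ) (m : ℕ) : RatFunc ℚ :=
  ∏ j ∈ Finset.range m, (1 - q ^ (r + d * (j : ℤ)))

/-- The q-integer `[m] = (1-q^m)/(1-q)`. -/
noncomputable def qint (m : ℤ) : RatFunc ℚ := (1 - q ^ m) / (1 - q)

/-- Congruence of rational functions modulo a polynomial `P`: the difference can be
written with numerator divisible by `P` and denominator coprime to `P`. -/
def modCong (A B : RatFunc ℚ) (P : Polynomial ℚ) : Prop :=
  ∃ c e : Polynomial ℚ, IsCoprime e P ∧
    A - B = algebraMap (Polynomial ℚ) (RatFunc ℚ) (P * c) /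
            algebraMap (Polynomial ℚ) (RatFunc ℚ) e

/-- The q-integer `[n]` as a polynomial: `1 + q + ⋯ + q^{n-1}`. -/
noncomputable def qintPoly (n : ℕ) : Polynomial ℚ := ∑ i ∈ Finset.range n, Polynomial.X ^ i

namespace Stmt0Aux

/-- geometric sum `1 + X^g + X^{2g} + ⋯ + X^{(k-1)g}`. -/
noncomputable def geom (g k : ℕ) : ℚ[X] := ∑ i ∈ Finset.range k, (Polynomial.X ^ g) ^ i

lemma geom_mul (g k : ℕ) : geom g k * (X ^ g - 1) = X ^ (g * k) - 1 := by
  rw [geom, geom_sum_mul, ← pow_mul]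

lemma X_pow_sub_one_ne_zero {k : ℕ} (hk : 0 < k) : (X : ℚ[X]) ^ k - 1 ≠ 0 := by
  have := Polynomial.X_pow_sub_C_ne_zero (R := ℚ) hk 1
  simpa using this

lemma geom_ne_zero {g k : ℕ} (hg : 0 < g) (hk : 0 < k) : geom g k ≠ 0 := by
  intro h
  have := geom_mul g k
  rw [h, zero_mul] at this
  exact X_pow_sub_one_ne_zero (Nat.mul_pos hg hk) this.symm

lemma dvd_gcd_aux : ∀ N b n : ℕ, b + n ≤ N → ∀ p : ℚ[X],
    p ∣ X ^ b - 1 → p ∣ X ^ n - 1 → p ∣ X ^ Nat.gcd b n - 1 := by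
  intro N
  induction N with
  | zero =>
    intro b n hbn p hb hn
    have hb0 : b = 0 := by omega
    have hn0 : n = 0 := by omega
    subst hb0; subst hn0; simpa using hn
  | succ N ih =>
    intro b n hbn p hb hn
    rcases Nat.eq_zero_or_pos b with hb0 | hbpos
    · subst hb0; simpa [Nat.gcd_zero_left] using hn
    rcases Nat.eq_zero_or_pos n with hn0 | hnpos
    · subst hn0; simpa [Nat.gcd_zero_right] using hb
    rcases le_or_gt b n with hle | hlt
    · have key : p ∣ X ^ (n - b) - 1 := by
        have hid : (X : ℚ[X]) ^ (n - b) - 1 = (X ^ n - 1) - X ^ (n - b) * (X ^ b - 1) := by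
          rw [mul_sub, ← pow_add, Nat.sub_add_cancel hle]; ring
        rw [hid]
        exact dvd_sub hn (hb.mul_left _)
      have := ih b (n - b) (by omega) p hb key
      rwa [Nat.gcd_sub_self_right hle] at this
    · have key : p ∣ X ^ (b - n) - 1 := by
        have hid : (X : ℚ[X]) ^ (b - n) - 1 = (X ^ b - 1) - X ^ (b - n) * (X ^ n - 1) := by
          rw [mul_sub, ← pow_add, Nat.sub_add_cancel hlt.le]; ring
        rw [hid]
        exact dvd_sub hb (hn.mul_left _)
      have := ih (b - n) n (by omega) p key hn
      rwa [Nat.gcd_sub_self_left hlt.le] at this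

lemma dvd_of_dvd_dvd {b n : ℕ} {p : ℚ[X]} (hb : p ∣ X ^ b - 1) (hn : p ∣ X ^ n - 1) :
    p ∣ X ^ Nat.gcd b n - 1 :=
  dvd_gcd_aux (b + n) b n le_rfl p hb hn

lemma geom_coprime {b n : ℕ} (hb : 0 < b) (hn : 0 < n) :
    IsCoprime (geom (Nat.gcd b n) (b / Nat.gcd b n)) ((X : ℚ[X]) ^ n - 1) := by
  set g := Nat.gcd b n with hg
  have hgpos : 0 < g := Nat.gcd_pos_of_pos_left _ hb
  have hgb : g ∣ b := Nat.gcd_dvd_left _ _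
  have hmul : geom g (b / g) * (X ^ g - 1) = (X : ℚ[X]) ^ b - 1 := by
    rw [geom_mul, Nat.mul_div_cancel' hgb]
  have hQ0 : geom g (b / g) ≠ 0 :=
    geom_ne_zero hgpos (Nat.div_pos (Nat.le_of_dvd hb hgb) hgpos)
  have hsq : Squarefree ((X : ℚ[X]) ^ b - 1) :=
    (Polynomial.X_pow_sub_one_separable_iff.mpr
      (by exact_mod_cast Nat.cast_ne_zero.mpr hb.ne')).squarefree
  have hcop1 : IsCoprime (geom g (b / g)) ((X : ℚ[X]) ^ g - 1) := by
    apply EuclideanDomain.isCoprime_of_dvd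
    · intro h; exact hQ0 h.1
    · intro z hz hz0 hzQ hzg
      exact hz (hsq z (by rw [← hmul]; exact mul_dvd_mul hzQ hzg))
  apply EuclideanDomain.isCoprime_of_dvd
  · intro h; exact hQ0 h.1
  · intro z hz hz0 hzQ hzn
    have hzb : z ∣ (X : ℚ[X]) ^ b - 1 := hzQ.trans ⟨X ^ g - 1, hmul.symm⟩
    exact hz (hcop1.isUnit_of_dvd' hzQ (dvd_of_dvd_dvd hzb hzn))

lemma one_sub_q_pow (k : ℕ) :
    1 - q ^ (k : ℤ) = algebraMap ℚ[X] (RatFunc ℚ) (1 - X ^ k) := by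
  rw [q, zpow_natCast, map_sub, map_one, map_pow, RatFunc.algebraMap_X]

lemma q_pow_ne_zero (k : ℕ) : q ^ (k : ℕ) ≠ 0 := by
  rw [q]; exact pow_ne_zero _ RatFunc.X_ne_zero

lemma isCoprime_X_one_sub_X_pow {n : ℕ} (hn : 0 < n) :
    IsCoprime (X : ℚ[X]) (1 - X ^ n) := by
  refine ⟨X ^ (n - 1), 1, ?_⟩
  rw [one_mul, ← pow_succ, Nat.sub_add_cancel hn]
  ring

lemma factor_rep (n b : ℕ) (hn : 0 < n) (hb : 0 < b) :
    ∃ P Q : ℚ[X], Q ≠ 0 ∧ IsCoprime Q (1 - X ^ n) ∧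
      (1 - q ^ ((n : ℤ) - (b : ℕ))) / (1 - q ^ ((b : ℕ) : ℤ)) =
        algebraMap ℚ[X] (RatFunc ℚ) P / algebraMap ℚ[X] (RatFunc ℚ) Q := by
  set g := Nat.gcd b n with hgdef
  have hgpos : 0 < g := Nat.gcd_pos_of_pos_left _ hb
  have hgb : g ∣ b := Nat.gcd_dvd_left _ _
  have hgn : g ∣ n := Nat.gcd_dvd_right _ _
  have hXg : ((X : ℚ[X]) ^ g - 1) ≠ 0 := X_pow_sub_one_ne_zero hgpos
  have hXgm : algebraMap ℚ[X] (RatFunc ℚ) ((X : ℚ[X]) ^ g - 1) ≠ 0 :=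
    RatFunc.algebraMap_ne_zero hXg
  have hcop : IsCoprime (geom g (b / g)) (1 - (X : ℚ[X]) ^ n) := by
    have := (geom_coprime hb hn).neg_right
    rwa [neg_sub] at this
  have hQb0 : geom g (b / g) ≠ 0 :=
    geom_ne_zero hgpos (Nat.div_pos (Nat.le_of_dvd hb hgb) hgpos)
  have hmulb : geom g (b / g) * (X ^ g - 1) = (X : ℚ[X]) ^ b - 1 := by
    rw [geom_mul, Nat.mul_div_cancel' hgb]
  rcases lt_trichotomy b n with hlt | heq | hgt
  · -- b < n
    refine ⟨geom g ((n - b) / g), geom g (b / g), hQb0, hcop, ?_⟩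
    have hgnb : g ∣ n - b := Nat.dvd_sub hgn hgb
    have hmula : geom g ((n - b) / g) * (X ^ g - 1) = (X : ℚ[X]) ^ (n - b) - 1 := by
      rw [geom_mul, Nat.mul_div_cancel' hgnb]
    have hcast : (n : ℤ) - (b : ℕ) = ((n - b : ℕ) : ℤ) := by omega
    rw [hcast, one_sub_q_pow, one_sub_q_pow]
    have h1 : (1 - (X : ℚ[X]) ^ (n - b)) = -(geom g ((n - b) / g) * (X ^ g - 1)) := by
      rw [hmula]; ring
    have h2 : (1 - (X : ℚ[X]) ^ b) = -(geom g (b / g) * (X ^ g - 1)) := by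
      rw [hmulb]; ring
    rw [h1, h2, map_neg, map_neg, neg_div_neg_eq, map_mul, map_mul,
      mul_div_mul_right _ _ hXgm]
  · -- b = n
    refine ⟨0, 1, one_ne_zero, isCoprime_one_left, ?_⟩
    subst heq
    simp
  · -- n < b
    refine ⟨geom g ((b - n) / g), -(X ^ (b - n) * geom g (b / g)), ?_, ?_, ?_⟩
    · intro h
      rw [neg_eq_zero, mul_eq_zero] at h
      rcases h with h | h
      · exact pow_ne_zero _ Polynomial.X_ne_zero h
      · exact hQb0 h
    · refine IsCoprime.neg_left (IsCoprime.mul_left ?_ hcop)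
      exact (isCoprime_X_one_sub_X_pow hn).pow_left
    · have hgbn : g ∣ b - n := Nat.dvd_sub hgb hgn
      have hmula : geom g ((b - n) / g) * (X ^ g - 1) = (X : ℚ[X]) ^ (b - n) - 1 := by
        rw [geom_mul, Nat.mul_div_cancel' hgbn]
      set k := b - n with hk
      have hcast : (n : ℤ) - (b : ℕ) = -((k : ℕ) : ℤ) := by omega
      rw [hcast, zpow_neg, zpow_natCast]
      have hqk : q ^ (k : ℕ) ≠ 0 := q_pow_ne_zero k
      have hstep : (1 - (q ^ (k : ℕ))⁻¹) = (q ^ (k:ℕ) - 1) / q ^ (k:ℕ) := by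
        field_simp
      rw [hstep, div_div]
      have hnum : q ^ (k : ℕ) - 1 = algebraMap ℚ[X] (RatFunc ℚ) ((X : ℚ[X]) ^ k - 1) := by
        rw [q, map_sub, map_one, map_pow, RatFunc.algebraMap_X]
      have hden : q ^ (k:ℕ) * (1 - q ^ ((b:ℕ) : ℤ)) =
          algebraMap ℚ[X] (RatFunc ℚ) ((X : ℚ[X]) ^ k * (1 - X ^ b)) := by
        rw [one_sub_q_pow, map_mul, map_pow, RatFunc.algebraMap_X, q]
      rw [hnum, hden]
      have h1 : ((X : ℚ[X]) ^ k - 1) = geom g (k / g) * (X ^ g - 1) := hmula.symm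
      have h2 : ((X : ℚ[X]) ^ k * (1 - X ^ b)) =
          (-(X ^ k * geom g (b / g))) * (X ^ g - 1) := by
        linear_combination (X : ℚ[X]) ^ k * hmulb
      rw [h1, h2, map_mul, map_mul, mul_div_mul_right _ _ hXgm]

end Stmt0Aux

/-- if `(q^r;q^d)_{(n-r)/d} / (q^d;q^d)_{(n-r)/d} = A(q)/B(q)` in lowest
terms, then `B(q)` is coprime to `1 - q^n`. -/
theorem stmt0 (n d : ℕ) (hn : 0 < n) (hd : 0 < d) (r : ℤ) (hr : r < (n : ℤ))
    (hmod : (n : ℤ) ≡ r [ZMOD (d : ℤ)]) :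
    IsCoprime
      (RatFunc.denom (qPoch r d (((n : ℤ) - r) / d).toNat / qPoch d d (((n : ℤ) - r) / d).toNat))
      (1 - Polynomial.X ^ n) := by
  have hdvd : (d : ℤ) ∣ (n : ℤ) - r := hmod.symm.dvd
  set m : ℕ := (((n : ℤ) - r) / d).toNat with hmdef
  obtain ⟨c, hc⟩ := hdvd
  have hc0 : 0 < c := by
    rcases le_or_gt c 0 with h | h
    · exfalso
      have : (d : ℤ) * c ≤ 0 := mul_nonpos_of_nonneg_of_nonpos (by positivity) h
      omega
    · exact h
  have hcdiv : ((n : ℤ) - r) / d = c := by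
    rw [hc, Int.mul_ediv_cancel_left _ (by exact_mod_cast hd.ne')]
  have hmc : (m : ℤ) = c := by rw [hmdef, hcdiv, Int.toNat_of_nonneg hc0.le]
  have hm : (n : ℤ) - r = d * m := by rw [hmc, ← hc]
  -- rewrite numerator and denominator
  have hnum : qPoch r d m = ∏ j ∈ Finset.range m,
      (1 - q ^ ((n : ℤ) - ((d * (j + 1) : ℕ) : ℤ))) := by
    rw [qPoch, ← Finset.prod_range_reflect]
    refine Finset.prod_congr rfl fun j hj => ?_
    have hj' : j < m := Finset.mem_range.mp hj
    have he : r + (d : ℤ) * ((m - 1 - j : ℕ) : ℤ) = (n : ℤ) - ((d * (j + 1) : ℕ) : ℤ) := by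
      have h1 : ((m - 1 - j : ℕ) : ℤ) = (m : ℤ) - 1 - j := by omega
      rw [h1]
      push_cast
      linear_combination -hm
    rw [he]
  have hden : qPoch d d m = ∏ j ∈ Finset.range m,
      (1 - q ^ (((d * (j + 1) : ℕ) : ℤ))) := by
    rw [qPoch]
    refine Finset.prod_congr rfl fun j hj => ?_
    have he : (d : ℤ) + (d : ℤ) * (j : ℤ) = ((d * (j + 1) : ℕ) : ℤ) := by
      push_cast
      ring
    rw [he]
  choose P Q hQ0 hQcop hrep using fun j : ℕ =>
    Stmt0Aux.factor_rep n (d * (j + 1)) hn (by positivity)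
  have hF : qPoch r d m / qPoch d d m =
      algebraMap ℚ[X] (RatFunc ℚ) (∏ j ∈ Finset.range m, P j) /
      algebraMap ℚ[X] (RatFunc ℚ) (∏ j ∈ Finset.range m, Q j) := by
    rw [hnum, hden, ← Finset.prod_div_distrib, map_prod, map_prod, ← Finset.prod_div_distrib]
    exact Finset.prod_congr rfl fun j _ => hrep j
  have hQprod : (∏ j ∈ Finset.range m, Q j) ≠ 0 :=
    Finset.prod_ne_zero_iff.mpr fun j _ => hQ0 j
  have hdenomdvd : RatFunc.denom (qPoch r d m / qPoch d d m) ∣ ∏ j ∈ Finset.range m, Q j :=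
    (RatFunc.denom_dvd hQprod).mpr ⟨∏ j ∈ Finset.range m, P j, hF⟩
  have hcopprod : IsCoprime (∏ j ∈ Finset.range m, Q j) (1 - (X : ℚ[X]) ^ n) :=
    IsCoprime.prod_left fun j _ => hQcop j
  exact hcopprod.of_isCoprime_of_dvd_left hdenomdvd
end

section
/- Let n, d be positive integers with gcd(n,d) = 1, and let r be an integer with n + d - nd ≤ r ≤ n and n ≡ r (mod d). Then modulo Φ_n(q)^4, one has (q^r;q^d)_{(n-r)/d} · (q^{n+d};q^d)_{(n-r)/d} / (q^d;q^d)_{(n-r)/d}^2 ≡ (-1)^{(n-r)/d} q^{(n-r)(n-d+r)/(2d)} · (1 - ([n]^2 + [n]^3(1-q)) · Σ_{k=1}^{(n-r)/d} q^{kd}/[kd]^2), where the congruence is between rational functions whose denominators are coprime to Φ_n(q). -/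
open Finset Polynomial

/-!
Put `t = 1 - q^n`, `s = (n-r)/d` and `m_j = (j+1)d`. Reversing the first product, the `j`-th factor
of the left side is `(1 - q^{n-m_j})(1 - q^{n+m_j})/(1 - q^{m_j})^2 = -q^{n-m_j} (1 - t^2 b_j)`
with `b_j = q^{m_j-n}/(1-q^{m_j})^2`, while on the right
`([n]^2 + [n]^3(1-q)) q^{m_j}/[m_j]^2 = (t^2 - t^4) b_j` because `1 - t = q^n`. Expanding
`∏_j (1 - t^2 b_j) = 1 - t^2 ∑_j b_j + t^4 G`, the two sides differ by
`±q^E t^4 (G - ∑_j b_j)`. Since `gcd(n, d) = 1` and `s < n`, no `m_j` is divisible by `n`, so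
`q` and every `1 - q^{m_j}` are invertible modulo `Φ_n`, while `Φ_n ∣ 1 - q^n = t`.
-/

namespace RatFunc

variable {K : Type*} [Field K]

/-- For irreducible `P` this is the localization of `K[X]` at `(P)`, embedded in `RatFunc K`. -/
def coprimeDenomSubring (P : K[X]) : Subring (RatFunc K) where
  carrier := {A | ∃ p e : K[X], IsCoprime e P ∧
    A = algebraMap K[X] (RatFunc K) p / algebraMap K[X] (RatFunc K) e}
  mul_mem' := by
    rintro _ _ ⟨p₁, e₁, h₁, rfl⟩ ⟨p₂, e₂, h₂, rfl⟩
    refine ⟨p₁ * p₂, e₁ * e₂, h₁.mul_left h₂, ?_⟩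
    rw [map_mul, map_mul, div_mul_div_comm]
  one_mem' := ⟨1, 1, isCoprime_one_left, by simp⟩
  add_mem' := by
    rintro _ _ ⟨p₁, e₁, h₁, rfl⟩ ⟨p₂, e₂, h₂, rfl⟩
    rcases eq_or_ne e₁ 0 with rfl | he₁
    · exact ⟨p₂, e₂, h₂, by simp⟩
    rcases eq_or_ne e₂ 0 with rfl | he₂
    · exact ⟨p₁, e₁, h₁, by simp⟩
    refine ⟨p₁ * e₂ + e₁ * p₂, e₁ * e₂, h₁.mul_left h₂, ?_⟩
    rw [div_add_div _ _ (by simpa using he₁) (by simpa using he₂)]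
    simp
  zero_mem' := ⟨0, 1, isCoprime_one_left, by simp⟩
  neg_mem' := by
    rintro _ ⟨p, e, h, rfl⟩
    exact ⟨-p, e, h, by rw [map_neg, neg_div]⟩

theorem algebraMap_mem_coprimeDenomSubring (P p : K[X]) :
    algebraMap K[X] (RatFunc K) p ∈ coprimeDenomSubring P :=
  ⟨p, 1, isCoprime_one_left, by simp⟩

theorem inv_algebraMap_mem_coprimeDenomSubring {P e : K[X]} (h : IsCoprime e P) :
    (algebraMap K[X] (RatFunc K) e)⁻¹ ∈ coprimeDenomSubring P :=
  ⟨1, e, h, by simp⟩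

end RatFunc

open RatFunc (coprimeDenomSubring)

theorem modCong_pow_of_sub_eq_mul {A B H : RatFunc ℚ} {P f : ℚ[X]} (k : ℕ) (hf : P ∣ f)
    (hH : H ∈ coprimeDenomSubring P) (h : A - B = algebraMap ℚ[X] (RatFunc ℚ) f ^ k * H) :
    modCong A B (P ^ k) := by
  obtain ⟨p, e, he, rfl⟩ := hH
  obtain ⟨w, rfl⟩ := hf
  refine ⟨w ^ k * p, e, he.pow_right, ?_⟩
  rw [h, ← map_pow, mul_div_assoc', ← map_mul, mul_pow, mul_assoc]

theorem Subring.exists_prod_one_sub_mul_eq {R ι : Type*} [CommRing R] (S : Subring R) {x : R}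
    (hx : x ∈ S) (I : Finset ι) {a : ι → R} (ha : ∀ i ∈ I, a i ∈ S) :
    ∃ G ∈ S, ∏ i ∈ I, (1 - x * a i) = 1 - x * ∑ i ∈ I, a i + x ^ 2 * G := by
  classical
  induction I using Finset.induction_on with
  | empty => exact ⟨0, S.zero_mem, by simp⟩
  | insert i I hi ih =>
    obtain ⟨G, hG, hprod⟩ := ih fun j hj => ha j (mem_insert_of_mem hj)
    have hai := ha i (mem_insert_self i I)
    have hsum := S.sum_mem fun j hj => ha j (mem_insert_of_mem hj)
    refine ⟨a i * ∑ j ∈ I, a j + G - x * a i * G,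
      S.sub_mem (S.add_mem (S.mul_mem hai hsum) hG) (S.mul_mem (S.mul_mem hx hai) hG), ?_⟩
    rw [prod_insert hi, sum_insert hi, hprod]
    ring

theorem prod_zpow_eq_zpow_sum {G₀ ι : Type*} [CommGroupWithZero G₀] {x : G₀} (hx : x ≠ 0)
    (I : Finset ι) (f : ι → ℤ) : ∏ i ∈ I, x ^ f i = x ^ ∑ i ∈ I, f i := by
  classical
  induction I using Finset.induction_on with
  | empty => simp
  | insert i I hi ih => rw [prod_insert hi, sum_insert hi, ih, zpow_add₀ hx]

theorem one_sub_zpow_sub_mul_one_sub_zpow_add_div {F : Type*} [Field F] {x : F} (hx : x ≠ 0)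
    (N M : ℤ) (hM : 1 - x ^ M ≠ 0) :
    (1 - x ^ (N - M)) * (1 - x ^ (N + M)) / (1 - x ^ M) ^ 2 =
      -x ^ (N - M) * (1 - (1 - x ^ N) ^ 2 * (x ^ (M - N) / (1 - x ^ M) ^ 2)) := by
  rw [zpow_sub₀ hx, zpow_add₀ hx, zpow_sub₀ hx]
  field_simp
  ring

theorem sum_range_sub_succ_mul_eq_ediv (N d : ℤ) (hd : d ≠ 0) (s : ℕ) :
    (N - (N - s * d)) * (N - d + (N - s * d)) / (2 * d) = ∑ j ∈ range s, (N - (j + 1) * d) := by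
  refine Int.ediv_eq_of_eq_mul_right (by positivity) ?_
  induction s with
  | zero => simp
  | succ s ih =>
    rw [sum_range_succ, mul_add (2 * d), ← ih]
    push_cast
    ring

theorem exists_toNat_ediv_eq_lt {n d : ℕ} {r : ℤ} (hd : 0 < d)
    (hr1 : (n : ℤ) + d - n * d ≤ r) (hr2 : r ≤ n) (hmod : (n : ℤ) ≡ r [ZMOD d]) :
    ∃ s : ℕ, (((n : ℤ) - r) / d).toNat = s ∧ r = n - s * d ∧ s < n := by
  obtain ⟨c, hc⟩ := hmod.symm.dvd
  have hc0 : 0 ≤ c := by nlinarith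
  refine ⟨c.toNat, by rw [hc, Int.mul_ediv_cancel_left _ (by omega)], ?_, ?_⟩
  · rw [Int.toNat_of_nonneg hc0]
    linarith
  · have hcd : (c + 1) * d ≤ n * d := by linarith
    have := le_of_mul_le_mul_right hcd (by exact_mod_cast hd)
    omega

theorem isCoprime_X_cyclotomic {R : Type*} [CommRing R] {n : ℕ} (hn : 0 < n) :
    IsCoprime (X : R[X]) (cyclotomic n R) :=
  IsCoprime.of_isCoprime_of_dvd_right
    ⟨X ^ (n - 1), -1, by rw [← pow_succ, Nat.sub_add_cancel hn]; ring⟩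
    (cyclotomic.dvd_X_pow_sub_one n R)

theorem isCoprime_X_pow_sub_one_cyclotomic {m n : ℕ} (h : ¬ n ∣ m) :
    IsCoprime (X ^ m - 1 : ℚ[X]) (cyclotomic n ℚ) := by
  have hm : 0 < m := Nat.pos_of_ne_zero fun hm => h (hm ▸ dvd_zero n)
  rw [← prod_cyclotomic_eq_X_pow_sub_one hm]
  exact IsCoprime.prod_left fun i hi =>
    cyclotomic.isCoprime_rat fun hin => h (hin ▸ Nat.dvd_of_mem_divisors hi)

theorem q_ne_zero : q ≠ 0 := RatFunc.X_ne_zero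

theorem q_pow (m : ℕ) : q ^ m = algebraMap ℚ[X] (RatFunc ℚ) (X ^ m) := by
  rw [map_pow, q, RatFunc.algebraMap_X]

theorem one_sub_q_pow (m : ℕ) : 1 - q ^ m = -algebraMap ℚ[X] (RatFunc ℚ) (X ^ m - 1) := by
  rw [map_sub, map_one, q_pow, neg_sub]

theorem one_sub_q_pow_ne_zero {m : ℕ} (hm : m ≠ 0) : (1 : RatFunc ℚ) - q ^ m ≠ 0 := by
  rw [one_sub_q_pow, neg_ne_zero, ne_eq, map_eq_zero_iff _ (RatFunc.algebraMap_injective ℚ),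
    ← C_1]
  exact X_pow_sub_C_ne_zero (Nat.pos_of_ne_zero hm) 1

theorem one_sub_q_ne_zero : (1 : RatFunc ℚ) - q ≠ 0 := by
  simpa using one_sub_q_pow_ne_zero one_ne_zero

theorem zpow_q_mem_coprimeDenomSubring {n : ℕ} (hn : 0 < n) (m : ℤ) :
    q ^ m ∈ coprimeDenomSubring (cyclotomic n ℚ) := by
  have hX := RatFunc.algebraMap_mem_coprimeDenomSubring (cyclotomic n ℚ) X
  have hXinv :=
    RatFunc.inv_algebraMap_mem_coprimeDenomSubring (isCoprime_X_cyclotomic (R := ℚ) hn)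
  rw [RatFunc.algebraMap_X, ← q] at hX hXinv
  obtain ⟨k, rfl | rfl⟩ := Int.eq_nat_or_neg m
  · simpa using Subring.pow_mem _ hX k
  · simpa using Subring.pow_mem _ hXinv k

theorem inv_one_sub_q_pow_mem_coprimeDenomSubring {m n : ℕ} (h : ¬ n ∣ m) :
    (1 - q ^ m)⁻¹ ∈ coprimeDenomSubring (cyclotomic n ℚ) := by
  rw [one_sub_q_pow, ← map_neg]
  exact RatFunc.inv_algebraMap_mem_coprimeDenomSubring
    (isCoprime_X_pow_sub_one_cyclotomic h).neg_left

theorem qPoch_sub_mul (N d : ℤ) (s : ℕ) :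
    qPoch (N - s * d) d s = ∏ j ∈ range s, (1 - q ^ (N - (j + 1) * d)) := by
  rw [qPoch, ← prod_range_reflect]
  refine prod_congr rfl fun j hj => ?_
  have hcast : ((s - 1 - j : ℕ) : ℤ) = s - 1 - j := by
    have := mem_range.mp hj
    omega
  rw [hcast]
  ring_nf

theorem qPoch_add_self (a d : ℤ) (s : ℕ) :
    qPoch (a + d) d s = ∏ j ∈ range s, (1 - q ^ (a + (j + 1) * d)) :=
  prod_congr rfl fun j _ => by ring_nf

/-- The weight `b_j` of the sketch above, for `N = n` and `M = m_j`. -/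
noncomputable def qWeight (N M : ℤ) : RatFunc ℚ := q ^ (M - N) / (1 - q ^ M) ^ 2

theorem qWeight_mem_coprimeDenomSubring {n m : ℕ} (hn : 0 < n) (h : ¬ n ∣ m) (N : ℤ) :
    qWeight N m ∈ coprimeDenomSubring (cyclotomic n ℚ) := by
  rw [qWeight, zpow_natCast, div_eq_mul_inv, ← inv_pow]
  exact Subring.mul_mem _ (zpow_q_mem_coprimeDenomSubring hn _)
    (Subring.pow_mem _ (inv_one_sub_q_pow_mem_coprimeDenomSubring h) 2)

theorem qPoch_mul_qPoch_div_sq (N : ℤ) {d : ℕ} (hd : d ≠ 0) (s : ℕ) :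
    qPoch (N - s * d) d s * qPoch (N + d) d s / qPoch d d s ^ 2 =
      (-1) ^ s * q ^ (∑ j ∈ range s, (N - (j + 1) * d)) *
        ∏ j ∈ range s, (1 - (1 - q ^ N) ^ 2 * qWeight N ((j + 1) * d)) := by
  have hden : qPoch d d s = ∏ j ∈ range s, (1 - q ^ ((j + 1) * (d : ℤ))) := by
    simpa using qPoch_add_self 0 d s
  rw [qPoch_sub_mul, qPoch_add_self, hden, ← prod_mul_distrib, ← prod_pow, ← prod_div_distrib]
  rw [prod_congr rfl fun j _ => one_sub_zpow_sub_mul_one_sub_zpow_add_div q_ne_zero N _ ?_]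
  · rw [prod_mul_distrib, prod_neg, prod_zpow_eq_zpow_sum q_ne_zero, card_range]
    rfl
  · exact_mod_cast one_sub_q_pow_ne_zero (m := (j + 1) * d) (by positivity)

theorem qint_sq_add_qint_cube_mul_div (N M : ℤ) (hM : 1 - q ^ M ≠ 0) :
    (qint N ^ 2 + qint N ^ 3 * (1 - q)) * (q ^ M / qint M ^ 2) =
      ((1 - q ^ N) ^ 2 - (1 - q ^ N) ^ 4) * qWeight N M := by
  have := one_sub_q_ne_zero
  have := zpow_ne_zero N q_ne_zero
  rw [qint, qint, qWeight, zpow_sub₀ q_ne_zero]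
  field_simp
  ring

theorem qint_mul_sum_Icc (N : ℤ) {d : ℕ} (hd : d ≠ 0) (s : ℕ) :
    (qint N ^ 2 + qint N ^ 3 * (1 - q)) * ∑ k ∈ Icc 1 s, q ^ (k * d) / qint (k * d) ^ 2 =
      ((1 - q ^ N) ^ 2 - (1 - q ^ N) ^ 4) * ∑ j ∈ range s, qWeight N ((j + 1) * d) := by
  rw [← Ico_add_one_right_eq_Icc, sum_Ico_eq_sum_range, add_tsub_cancel_right, mul_sum, mul_sum]
  refine sum_congr rfl fun j _ => ?_
  have hm : ((1 + j : ℕ) : ℤ) * d = (j + 1) * d := by push_cast; ring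
  rw [← zpow_natCast q, Nat.cast_mul, hm, qint_sq_add_qint_cube_mul_div]
  exact_mod_cast one_sub_q_pow_ne_zero (m := (j + 1) * d) (by positivity)

theorem stmt2_general (n d : ℕ) (hd : 0 < d) (hnd : Nat.gcd n d = 1) (r : ℤ)
    (hr1 : (n : ℤ) + d - n * d ≤ r) (hr2 : r ≤ (n : ℤ))
    (hmod : (n : ℤ) ≡ r [ZMOD (d : ℤ)]) :
    modCong
      (qPoch r d (((n : ℤ) - r) / d).toNat * qPoch ((n : ℤ) + d) d (((n : ℤ) - r) / d).toNat /
        (qPoch d d (((n : ℤ) - r) / d).toNat) ^ 2)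
      ((-1) ^ (((n : ℤ) - r) / d).toNat * q ^ ((((n : ℤ) - r) * ((n : ℤ) - d + r)) / (2 * d)) *
        (1 - ((qint n) ^ 2 + (qint n) ^ 3 * (1 - q)) *
          ∑ k ∈ Finset.Icc 1 (((n : ℤ) - r) / d).toNat, q ^ (k * d) / (qint (k * d)) ^ 2))
      ((Polynomial.cyclotomic n ℚ) ^ 4) := by
  obtain ⟨s, hs, rfl, hsn⟩ := exists_toNat_ediv_eq_lt hd hr1 hr2 hmod
  have hn : 0 < n := by omega
  have hndvd : ∀ j ∈ range s, ¬ n ∣ (j + 1) * d := fun j hj h =>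
    (Nat.le_of_dvd j.succ_pos (Nat.Coprime.dvd_of_dvd_mul_right hnd h)).not_gt
      (by rw [mem_range] at hj; omega)
  set S := coprimeDenomSubring (cyclotomic n ℚ)
  have hb : ∀ j ∈ range s, qWeight n ((j + 1) * d) ∈ S := fun j hj => by
    exact_mod_cast qWeight_mem_coprimeDenomSubring hn (hndvd j hj) n
  have ht : 1 - q ^ (n : ℤ) ∈ S := S.sub_mem S.one_mem (zpow_q_mem_coprimeDenomSubring hn n)
  obtain ⟨G, hG, hprod⟩ := S.exists_prod_one_sub_mul_eq (S.pow_mem ht 2) (range s) hb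
  rw [hs, sum_range_sub_succ_mul_eq_ediv _ _ (by positivity), qPoch_mul_qPoch_div_sq _ hd.ne',
    qint_mul_sum_Icc _ hd.ne', hprod]
  have hE := zpow_q_mem_coprimeDenomSubring hn (∑ j ∈ range s, ((n : ℤ) - (j + 1) * d))
  refine modCong_pow_of_sub_eq_mul 4 (cyclotomic.dvd_X_pow_sub_one n ℚ)
    (S.mul_mem (S.mul_mem (S.pow_mem (S.neg_mem S.one_mem) s) hE) (S.sub_mem hG (S.sum_mem hb))) ?_
  rw [show algebraMap ℚ[X] (RatFunc ℚ) (X ^ n - 1) = -(1 - q ^ (n : ℤ)) by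
    rw [zpow_natCast, one_sub_q_pow, neg_neg]]
  ring

/-- modulo `Φ_n(q)^4`,
`(q^r;q^d)_s (q^{n+d};q^d)_s / (q^d;q^d)_s^2 ≡ (-1)^s q^{(n-r)(n-d+r)/(2d)}
  (1 - ([n]^2+[n]^3(1-q)) Σ_{k=1}^s q^{kd}/[kd]^2)` where `s = (n-r)/d`. -/
theorem stmt2 (n d : ℕ) (hn : 0 < n) (hd : 0 < d) (hnd : Nat.gcd n d = 1) (r : ℤ)
    (hr1 : (n : ℤ) + d - n * d ≤ r) (hr2 : r ≤ (n : ℤ))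
    (hmod : (n : ℤ) ≡ r [ZMOD (d : ℤ)]) :
    modCong
      (qPoch r d (((n : ℤ) - r) / d).toNat * qPoch ((n : ℤ) + d) d (((n : ℤ) - r) / d).toNat /
        (qPoch d d (((n : ℤ) - r) / d).toNat) ^ 2)
      ((-1) ^ (((n : ℤ) - r) / d).toNat * q ^ ((((n : ℤ) - r) * ((n : ℤ) - d + r)) / (2 * d)) *
        (1 - ((qint n) ^ 2 + (qint n) ^ 3 * (1 - q)) *
          ∑ k ∈ Finset.Icc 1 (((n : ℤ) - r) / d).toNat, q ^ (k * d) / (qint (k * d)) ^ 2))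
      ((Polynomial.cyclotomic n ℚ) ^ 4) :=
  stmt2_general n d hd hnd r hr1 hr2 hmod
end

section
/- Let n, d be positive integers and r an integer with gcd(r,d) = 1, r < (d-1)n, and d | (n+r). If (q^r;q^d)_{((d-1)n-r)/d} / (q^d;q^d)_{((d-1)n-r)/d} is written in lowest terms as A(q)/B(q), then B(q) is coprime to 1 - q^n. -/
/-!
Let `m = ((d-1)n - r)/d`. Up to monomial factors, the quotient is `N / D` with
`N = ∏_{j<m} (1 - q^|r+dj|)` and `D = ∏_{j<m} (1 - q^{d(j+1)})`. A common factor of its reduced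
denominator and `1 - q^n` would have a complex root `z` whose order `k` divides `n`; as
`d ∣ n + r` and `gcd(r, d) = 1`, `k` is prime to `d`. Since `1 - X^e` has simple roots, `z` is a
root of `D` of multiplicity `#{j < m | k ∣ j + 1} = ⌊m/k⌋`, and of `N` of multiplicity
`#{j < m | k ∣ r + dj}`, which is at least `⌊m/k⌋` because `r + dj` runs through all residues
mod `k` on every block of `k` consecutive `j`. So `z` cancels completely and cannot be a root of
the reduced denominator.
-/

open Finset Polynomial

section RootMultiplicity

variable {R : Type*} [CommRing R] [IsDomain R]

lemma Polynomial.rootMultiplicity_prod {ι : Type*} {s : Finset ι} {f : ι → R[X]}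
    (h : ∏ i ∈ s, f i ≠ 0) (z : R) :
    rootMultiplicity z (∏ i ∈ s, f i) = ∑ i ∈ s, rootMultiplicity z (f i) := by
  classical
  rw [← count_roots, roots_prod f s h, Multiset.count_bind]
  simp [count_roots]

variable {L : Type*} [Field L] [CharZero L]

lemma rootMultiplicity_one_sub_X_pow [DecidableEq L] {e : ℕ} (he : e ≠ 0) (z : L) :
    rootMultiplicity z (1 - X ^ e : L[X]) = if z ^ e = 1 then 1 else 0 := by
  have hne : (1 - X ^ e : L[X]) ≠ 0 := by
    intro h; simpa [he] using congrArg (eval 0) h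
  split_ifs with hz
  · have hsep : (1 - X ^ e : L[X]).Separable :=
      (X_pow_sub_one_separable_iff.2 (Nat.cast_ne_zero.2 he)).of_dvd ⟨-1, by ring⟩
    refine le_antisymm (rootMultiplicity_le_one_of_separable hsep z) ?_
    exact (rootMultiplicity_pos hne).2 (by simp [hz])
  · refine rootMultiplicity_eq_zero ?_
    rw [IsRoot.def, eval_sub, eval_one, eval_pow, eval_X, sub_eq_zero]
    exact Ne.symm hz

lemma rootMultiplicity_prod_one_sub_X_pow {ι : Type*} {s : Finset ι} {e : ι → ℕ}
    (h : ∏ i ∈ s, (1 - X ^ e i : L[X]) ≠ 0) (z : L) :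
    rootMultiplicity z (∏ i ∈ s, (1 - X ^ e i : L[X])) = #{i ∈ s | orderOf z ∣ e i} := by
  classical
  have he : ∀ i ∈ s, e i ≠ 0 := fun i hi h0 => h (prod_eq_zero hi (by simp [h0]))
  rw [rootMultiplicity_prod h, card_filter]
  refine sum_congr rfl fun i hi => ?_
  simp only [rootMultiplicity_one_sub_X_pow (he i hi), orderOf_dvd_iff_pow_eq_one]

end RootMultiplicity

lemma RatFunc.isCoprime_denom_of_rootMultiplicity_le {K L : Type*} [Field K] [Field L]
    [IsAlgClosed L] [Algebra K L] {F : RatFunc K} {N D P : K[X]} (hD : D ≠ 0)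
    (hF : F * algebraMap K[X] (RatFunc K) D = algebraMap K[X] (RatFunc K) N)
    (hP : ∀ z : L, aeval z P = 0 →
      rootMultiplicity z (D.map (algebraMap K L)) ≤ rootMultiplicity z (N.map (algebraMap K L))) :
    IsCoprime F.denom P := by
  rw [isCoprime_iff_aeval_ne_zero_of_isAlgClosed K L]
  by_contra! h
  obtain ⟨z, hzden, hzP⟩ := h
  have hznum : aeval z F.num ≠ 0 :=
    (aeval_ne_zero_of_isCoprime F.isCoprime_num_denom z).resolve_right (not_not.2 hzden)
  have hcross : F.num * D = N * F.denom := by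
    apply IsFractionRing.injective K[X] (RatFunc K)
    have hnum : algebraMap K[X] (RatFunc K) F.num = F * algebraMap K[X] (RatFunc K) F.denom :=
      (div_eq_iff (RatFunc.algebraMap_ne_zero F.denom_ne_zero)).1 F.num_div_denom
    rw [map_mul, map_mul, hnum, ← hF]
    ring
  have hnum' : F.num.map (algebraMap K L) ≠ 0 := fun h => hznum <| by
    simpa [eval_map_algebraMap] using congrArg (Polynomial.eval z) h
  have hLeft : F.num.map (algebraMap K L) * D.map (algebraMap K L) ≠ 0 :=
    mul_ne_zero hnum' (Polynomial.map_ne_zero hD)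
  have hRight : N.map (algebraMap K L) * F.denom.map (algebraMap K L) ≠ 0 := by
    rwa [← Polynomial.map_mul, ← hcross, Polynomial.map_mul]
  have hmult : rootMultiplicity z (F.num.map (algebraMap K L) * D.map (algebraMap K L)) =
      rootMultiplicity z (N.map (algebraMap K L) * F.denom.map (algebraMap K L)) := by
    rw [← Polynomial.map_mul, hcross, Polynomial.map_mul]
  rw [rootMultiplicity_mul hLeft, rootMultiplicity_mul hRight,
    rootMultiplicity_eq_zero (by simpa [eval_map_algebraMap] using hznum)] at hmult
  have hden : 0 < rootMultiplicity z (F.denom.map (algebraMap K L)) :=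
    (rootMultiplicity_pos (Polynomial.map_ne_zero F.denom_ne_zero)).2
      (by simpa [eval_map_algebraMap] using hzden)
  have hle := hP z hzP
  omega

lemma isCoprime_of_dvd_add {R : Type*} [CommRing R] {r d n : R} (hrd : IsCoprime r d)
    (hdiv : d ∣ n + r) : IsCoprime d n := by
  obtain ⟨t, ht⟩ := hdiv
  rw [show n = -r + d * t by linear_combination ht]
  exact hrd.symm.neg_right.add_mul_left_right t

section Counting

variable {k d : ℕ}

lemma dvd_add_mul_iff_modEq (hdk : d.Coprime k) {a : ℤ} {v : ℕ} (hv : (k : ℤ) ∣ a + d * v)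
    (j : ℕ) : (k : ℤ) ∣ a + d * j ↔ j ≡ v [MOD k] := by
  have hc : IsCoprime (k : ℤ) d := (Nat.isCoprime_iff_coprime.2 hdk).symm
  rw [Nat.modEq_iff_dvd, ← dvd_sub_right hv,
    show a + d * v - (a + d * j) = d * ((v : ℤ) - j) by ring]
  exact ⟨hc.dvd_of_dvd_mul_left, fun h => h.mul_left _⟩

lemma exists_dvd_add_mul (hk : 0 < k) (hdk : d.Coprime k) (a : ℤ) :
    ∃ v : ℕ, (k : ℤ) ∣ a + d * v := by
  obtain ⟨u, w, huw⟩ := Nat.isCoprime_iff_coprime.2 hdk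
  refine ⟨(-a * u % k).toNat, ?_⟩
  rw [Int.toNat_of_nonneg (Int.emod_nonneg _ (by exact_mod_cast hk.ne')), Int.emod_def]
  exact ⟨a * w - d * (-a * u / k), by linear_combination (-a) * huw⟩

lemma card_filter_dvd_add_mul_eq_count (hdk : d.Coprime k) {a : ℤ} {v : ℕ}
    (hv : (k : ℤ) ∣ a + d * v) (m : ℕ) :
    #{j ∈ range m | (k : ℤ) ∣ a + d * (j : ℕ)} = m.count (· ≡ v [MOD k]) := by
  rw [Nat.count_eq_card_filter_range]
  exact congrArg card (filter_congr fun j _ => dvd_add_mul_iff_modEq hdk hv j)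

lemma div_le_card_filter_dvd_add_mul (hk : 0 < k) (hdk : d.Coprime k) (a : ℤ) (m : ℕ) :
    m / k ≤ #{j ∈ range m | (k : ℤ) ∣ a + d * (j : ℕ)} := by
  obtain ⟨v, hv⟩ := exists_dvd_add_mul hk hdk a
  rw [card_filter_dvd_add_mul_eq_count hdk hv, Nat.count_modEq_card _ hk]
  exact Nat.le_add_right _ _

lemma card_filter_dvd_add_mul_self (hk : 0 < k) (hdk : d.Coprime k) (m : ℕ) :
    #{j ∈ range m | (k : ℤ) ∣ d + d * (j : ℕ)} = m / k := by
  have hv : (k : ℤ) ∣ d + d * (k - 1 : ℕ) := ⟨d, by push_cast [Nat.cast_sub hk]; ring⟩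
  rw [card_filter_dvd_add_mul_eq_count hdk hv, Nat.count_modEq_card _ hk,
    Nat.mod_eq_of_lt (Nat.sub_lt hk one_pos)]
  have := Nat.mod_lt m hk
  simp only [add_eq_left, ite_eq_right_iff]
  omega

end Counting

noncomputable def qPochNum (a d : ℤ) (m : ℕ) : ℚ[X] :=
  ∏ j ∈ range m, (1 - X ^ (a + d * j).natAbs)

noncomputable def qPochDen (a d : ℤ) (m : ℕ) : ℚ[X] :=
  ∏ j ∈ range m, if 0 ≤ a + d * j then 1 else -X ^ (a + d * j).natAbs

lemma one_sub_q_zpow (e : ℤ) :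
    1 - q ^ e = algebraMap ℚ[X] (RatFunc ℚ) (1 - X ^ e.natAbs) /
      algebraMap ℚ[X] (RatFunc ℚ) (if 0 ≤ e then 1 else -X ^ e.natAbs) := by
  split_ifs with he
  · obtain ⟨k, rfl⟩ := Int.eq_ofNat_of_zero_le he
    simp [q]
  · obtain ⟨k, rfl⟩ := Int.exists_eq_neg_ofNat (le_of_not_ge he)
    have hk : (RatFunc.X : RatFunc ℚ) ^ k ≠ 0 := pow_ne_zero _ RatFunc.X_ne_zero
    simp only [q, zpow_neg, zpow_natCast, Int.natAbs_neg, Int.natAbs_natCast, map_sub, map_one,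
      map_pow, RatFunc.algebraMap_X, map_neg]
    field_simp
    ring

lemma qPoch_eq_div (a d : ℤ) (m : ℕ) :
    qPoch a d m = algebraMap ℚ[X] (RatFunc ℚ) (qPochNum a d m) /
      algebraMap ℚ[X] (RatFunc ℚ) (qPochDen a d m) := by
  simp only [qPoch, qPochNum, qPochDen, map_prod, ← prod_div_distrib, one_sub_q_zpow]

lemma aeval_qPochDen_ne_zero {L : Type*} [Field L] [Algebra ℚ L] {z : L} (hz : z ≠ 0)
    (a d : ℤ) (m : ℕ) : aeval z (qPochDen a d m) ≠ 0 := by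
  simp only [qPochDen, map_prod]
  refine prod_ne_zero_iff.2 fun j _ => ?_
  split_ifs <;> simp [hz]

lemma qPochDen_ne_zero (a d : ℤ) (m : ℕ) : qPochDen a d m ≠ 0 := fun h =>
  aeval_qPochDen_ne_zero (L := ℚ) one_ne_zero a d m (by rw [h, map_zero])

lemma qPochNum_ne_zero {a d : ℤ} {m : ℕ} (h : qPoch a d m ≠ 0) : qPochNum a d m ≠ 0 := by
  intro hN
  rw [qPoch_eq_div, hN, map_zero, zero_div] at h
  exact h rfl

lemma rootMultiplicity_map_qPochNum_mul_qPochDen {L : Type*} [Field L] [CharZero L] {z : L}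
    (hz : z ≠ 0) {a d b e : ℤ} {m m' : ℕ} (hN : qPochNum a d m ≠ 0) :
    rootMultiplicity z ((qPochNum a d m * qPochDen b e m').map (algebraMap ℚ L)) =
      #{j ∈ range m | (orderOf z : ℤ) ∣ a + d * (j : ℕ)} := by
  have hmap : (qPochNum a d m).map (algebraMap ℚ L) =
      ∏ j ∈ range m, (1 - X ^ (a + d * j).natAbs) := by
    simp [qPochNum, Polynomial.map_prod]
  have hN' : (qPochNum a d m).map (algebraMap ℚ L) ≠ 0 := Polynomial.map_ne_zero hN
  have hD : rootMultiplicity z ((qPochDen b e m').map (algebraMap ℚ L)) = 0 :=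
    rootMultiplicity_eq_zero (by simpa [eval_map_algebraMap] using aeval_qPochDen_ne_zero hz b e m')
  rw [Polynomial.map_mul,
    rootMultiplicity_mul (mul_ne_zero hN' (Polynomial.map_ne_zero (qPochDen_ne_zero b e m'))), hD,
    add_zero, hmap, rootMultiplicity_prod_one_sub_X_pow (hmap ▸ hN')]
  simp only [Int.natCast_dvd]

lemma qPoch_div_qPoch_mul {a d b e : ℤ} {m m' : ℕ} (h : qPoch b e m' ≠ 0) :
    qPoch a d m / qPoch b e m' * algebraMap ℚ[X] (RatFunc ℚ) (qPochDen a d m * qPochNum b e m') =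
      algebraMap ℚ[X] (RatFunc ℚ) (qPochNum a d m * qPochDen b e m') := by
  have hN := RatFunc.algebraMap_ne_zero (qPochNum_ne_zero h)
  have hDa := RatFunc.algebraMap_ne_zero (qPochDen_ne_zero a d m)
  have hDb := RatFunc.algebraMap_ne_zero (qPochDen_ne_zero b e m')
  rw [qPoch_eq_div, qPoch_eq_div, map_mul, map_mul]
  field_simp

theorem stmt7_general (n d : ℕ) (hn : 0 < n) (r : ℤ)
    (hrd : IsCoprime r (d : ℤ)) (hdiv : (d : ℤ) ∣ (n : ℤ) + r) :
    IsCoprime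
      (RatFunc.denom (qPoch r d ((((d : ℤ) - 1) * n - r) / d).toNat /
        qPoch d d ((((d : ℤ) - 1) * n - r) / d).toNat))
      (1 - Polynomial.X ^ n) := by
  set m := ((((d : ℤ) - 1) * n - r) / d).toNat
  by_cases hzero : qPoch r d m = 0 ∨ qPoch d d m = 0
  · rcases hzero with h | h <;> simp [h, isCoprime_one_left]
  obtain ⟨hr0, hd0⟩ := not_or.1 hzero
  refine RatFunc.isCoprime_denom_of_rootMultiplicity_le (L := ℂ)
    (mul_ne_zero (qPochDen_ne_zero _ _ _) (qPochNum_ne_zero hd0))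
    (qPoch_div_qPoch_mul hd0) fun z hz => ?_
  have hzn : z ^ n = 1 := by
    rw [map_sub, map_one, map_pow, aeval_X, sub_eq_zero] at hz
    exact hz.symm
  have hz0 : z ≠ 0 := by rintro rfl; simp [hn.ne'] at hzn
  have hk : 0 < orderOf z := (isOfFinOrder_iff_pow_eq_one.2 ⟨n, hn, hzn⟩).orderOf_pos
  have hdk : d.Coprime (orderOf z) := Nat.isCoprime_iff_coprime.1 <|
    (isCoprime_of_dvd_add hrd hdiv).of_isCoprime_of_dvd_right
      (Int.natCast_dvd_natCast.2 (orderOf_dvd_of_pow_eq_one hzn))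
  rw [mul_comm, rootMultiplicity_map_qPochNum_mul_qPochDen hz0 (qPochNum_ne_zero hd0),
    rootMultiplicity_map_qPochNum_mul_qPochDen hz0 (qPochNum_ne_zero hr0),
    card_filter_dvd_add_mul_self hk hdk]
  exact div_le_card_filter_dvd_add_mul hk hdk r m

/-- the denominator of
`(q^r;q^d)_{((d-1)n-r)/d} / (q^d;q^d)_{((d-1)n-r)/d}` in lowest terms is
coprime to `1 - q^n`. -/
theorem stmt7 (n d : ℕ) (hn : 0 < n) (hd : 0 < d) (r : ℤ)
    (hrd : IsCoprime r (d : ℤ)) (hr : r < ((d : ℤ) - 1) * n) (hdiv : (d : ℤ) ∣ (n : ℤ) + r) :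
    IsCoprime
      (RatFunc.denom (qPoch r d ((((d : ℤ) - 1) * n - r) / d).toNat /
        qPoch d d ((((d : ℤ) - 1) * n - r) / d).toNat))
      (1 - Polynomial.X ^ n) :=
  stmt7_general n d hn r hrd hdiv
end

section
/- Let p ≥ 5 be a prime. Then H^{(2)}_{(p-1)/2} ≡ (7/3) p B_{p-3} (mod p^2), where H^{(2)}_m = Σ_{k=1}^m 1/k^2 and B_{p-3} is the (p-3)-rd Bernoulli number. -/
open Finset

/-- `A ≡ B (mod p^e)` for rational numbers, in the p-adic sense: the difference can be
written as `p^e · a / b` with `b` an integer not divisible by `p`. -/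
def ratCongr (A B : ℚ) (p : ℕ) (e : ℕ) : Prop :=
  ∃ a b : ℤ, ¬ (p : ℤ) ∣ b ∧ (A - B) * (b : ℚ) = (p : ℚ) ^ e * (a : ℚ)

/-- The Pochhammer symbol (rising factorial) `(a)_k = a(a+1)⋯(a+k-1)` for rational `a`. -/
noncomputable def rpoch (a : ℚ) (k : ℕ) : ℚ := (ascPochhammer ℚ k).eval a

/-- The harmonic number of order 2: `H^{(2)}_m = Σ_{j=1}^m 1/j^2`. -/
def H2 (m : ℕ) : ℚ := ∑ j ∈ Finset.Icc 1 m, 1 / (j : ℚ) ^ 2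

/-!
Write `m = (p-1)/2`, `H_r = Σ_{k ≤ m} 1/k^r` and `F = Σ_{k < p} 1/k^2`. Expanding
`1/(p-a)^2 ≡ 1/a^2 + 2p/a^3 (mod p^2)` and splitting `F` once into `k ≤ m` and `k = p - j`,
once into even `k = 2j` and odd `k = p - 2j`, gives two congruences
`F ≡ 2 H_2 + 2p H_3` and `F ≡ H_2/2 + p H_3/4 (mod p^2)`, whence `H_2 ≡ -(7/6) p H_3`.
It remains to know `H_3 (mod p)`: by Fermat it is `Σ_{k ≤ m} k^{p-4}`, and Faulhaber's formula
evaluates this sum through the Bernoulli polynomial `B_{p-3}` at `(p+1)/2 ≡ 1/2`, where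
`B_n(1/2) = (2^{1-n} - 1) B_n`; this gives `H_3 ≡ -2 B_{p-3} (mod p)`.
Congruences are handled as bounds on `p`-adic norms in `ℚ_[p]`.
-/

open IsUltrametricDist
open scoped Polynomial

def harmonicPow (K : Type*) [DivisionRing K] (r n : ℕ) : K := ∑ k ∈ Icc 1 n, ((k : K) ^ r)⁻¹

theorem Finset.sum_Icc_two_mul_eq_sum_add_reflect {M : Type*} [AddCommMonoid M] (f : ℕ → M)
    (m : ℕ) : ∑ k ∈ Icc 1 (2 * m), f k = ∑ j ∈ Icc 1 m, (f j + f (2 * m + 1 - j)) := by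
  rw [sum_add_distrib, ← sum_filter_add_sum_filter_not _ (· ≤ m)]
  congr 1
  · exact sum_congr (by ext; simp; omega) fun _ _ => rfl
  · refine sum_nbij' (2 * m + 1 - ·) (2 * m + 1 - ·) ?_ ?_ ?_ ?_ ?_ <;>
      intro k hk <;> simp at hk ⊢ <;> first | omega | (congr 1; omega)

theorem Finset.sum_Icc_two_mul_eq_sum_even_add_odd {M : Type*} [AddCommMonoid M] (f : ℕ → M)
    (m : ℕ) : ∑ k ∈ Icc 1 (2 * m), f k = ∑ j ∈ Icc 1 m, (f (2 * j) + f (2 * m + 1 - 2 * j)) := by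
  rw [sum_add_distrib, ← sum_filter_add_sum_filter_not _ Even]
  congr 1
  · refine sum_nbij' (· / 2) (2 * ·) ?_ ?_ ?_ ?_ ?_ <;>
      intro k hk <;> simp [Nat.even_iff] at hk ⊢ <;> first | omega | (congr 1; omega)
  · refine sum_nbij' ((2 * m + 1 - ·) / 2) (2 * m + 1 - 2 * ·) ?_ ?_ ?_ ?_ ?_ <;>
      intro k hk <;> simp [Nat.even_iff] at hk ⊢ <;> first | omega | (congr 1; omega)

open PowerSeries in
theorem bernoulli_generating_function_half :
    (mk fun n => Polynomial.aeval (2⁻¹ : ℚ) ((1 / n.factorial : ℚ) • Polynomial.bernoulli n)) =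
      C (2 : ℚ) * rescale 2⁻¹ (bernoulliPowerSeries ℚ) - bernoulliPowerSeries ℚ := by
  set E := rescale (2⁻¹ : ℚ) (exp ℚ)
  have hne : (exp ℚ - 1 : ℚ⟦X⟧) ≠ 0 := fun h => by
    simpa [coeff_exp] using congrArg (coeff 1) h
  have hsq : E ^ 2 = exp ℚ := by
    rw [← map_pow, exp_pow_eq_rescale_exp, rescale_rescale]
    norm_num
  have hhalf : rescale (2⁻¹ : ℚ) (bernoulliPowerSeries ℚ) * (E - 1) = C 2⁻¹ * X := by
    rw [← map_one (rescale (2⁻¹ : ℚ)), ← map_sub, ← map_mul, bernoulliPowerSeries_mul_exp_sub_one,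
      rescale_X]
  have hC : C (2 : ℚ) * C 2⁻¹ = 1 := by rw [← map_mul]; norm_num
  refine mul_right_cancel₀ hne ?_
  rw [Polynomial.bernoulli_generating_function, sub_mul, bernoulliPowerSeries_mul_exp_sub_one]
  linear_combination (C 2 * rescale (2⁻¹ : ℚ) (bernoulliPowerSeries ℚ)) * hsq
    - C 2 * (E + 1) * hhalf - (E + 1) * X * hC

theorem Polynomial.bernoulli_eval_half (n : ℕ) :
    (bernoulli n).eval (2⁻¹ : ℚ) = (2 * 2⁻¹ ^ n - 1) * _root_.bernoulli n := by
  have h := congrArg (PowerSeries.coeff n) bernoulli_generating_function_half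
  simp only [coe_aeval_eq_eval, PowerSeries.coeff_mk, map_smul, smul_eq_mul, map_sub,
    PowerSeries.coeff_C_mul, PowerSeries.coeff_rescale, bernoulliPowerSeries,
    Algebra.algebraMap_self, RingHom.id_apply] at h
  have : (n.factorial : ℚ) ≠ 0 := by positivity
  field_simp at h
  rw [one_div] at h
  linear_combination h

section NormedField

variable {K : Type*} [NormedField K] {a b : K} {r : ℝ}

theorem norm_mul_le_of_norm_le_one (ha : ‖a‖ ≤ 1) (hb : ‖b‖ ≤ r) : ‖a * b‖ ≤ r := by
  rw [norm_mul]
  exact (mul_le_of_le_one_left (norm_nonneg _) ha).trans hb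

theorem norm_le_of_norm_mul_le {u : K} (hu : ‖u‖ = 1) (h : ‖u * a‖ ≤ r) : ‖a‖ ≤ r := by
  rwa [norm_mul, hu, one_mul] at h

theorem norm_inv_pow_three_sub_pow (ha : ‖a‖ = 1) (m : ℕ) :
    ‖(a ^ 3)⁻¹ - a ^ m‖ = ‖a ^ (m + 3) - 1‖ := by
  have ha0 : a ≠ 0 := norm_ne_zero_iff.mp (by rw [ha]; exact one_ne_zero)
  rw [show (a ^ 3)⁻¹ - a ^ m = -(a ^ 3)⁻¹ * (a ^ (m + 3) - 1) by field_simp; ring,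
    norm_mul, norm_neg, norm_inv, norm_pow, ha]
  simp

variable [IsUltrametricDist K]

theorem IsUltrametricDist.norm_add_le_of_le (ha : ‖a‖ ≤ r) (hb : ‖b‖ ≤ r) : ‖a + b‖ ≤ r :=
  (norm_add_le_max a b).trans (max_le ha hb)

theorem norm_add_pow_sub_pow_le (ha : ‖a‖ ≤ 1) (hb : ‖b‖ ≤ 1) (n : ℕ) :
    ‖(a + b) ^ n - a ^ n‖ ≤ ‖b‖ := by
  have hab : ‖a + b‖ ≤ 1 := norm_add_le_of_le ha hb
  rw [← geom_sum₂_mul, add_sub_cancel_left]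
  refine norm_mul_le_of_norm_le_one (norm_sum_le_of_forall_le_of_nonneg zero_le_one
    fun i _ => ?_) le_rfl
  rw [norm_mul, norm_pow, norm_pow]
  exact mul_le_one₀ (pow_le_one₀ (norm_nonneg _) hab) (by positivity)
    (pow_le_one₀ (norm_nonneg _) ha)

theorem Polynomial.norm_eval_add_sub_eval_le {f : K[X]} (hf : ∀ n, ‖f.coeff n‖ ≤ 1)
    (ha : ‖a‖ ≤ 1) (hb : ‖b‖ ≤ 1) : ‖f.eval (a + b) - f.eval a‖ ≤ ‖b‖ := by
  simp only [eval_eq_sum, sum_def, ← sum_sub_distrib, ← mul_sub]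
  exact norm_sum_le_of_forall_le_of_nonneg (norm_nonneg _) fun n _ =>
    norm_mul_le_of_norm_le_one (hf n) (norm_add_pow_sub_pow_le ha hb n)

theorem norm_inv_sub_sq_sub_le (ha : ‖a‖ = 1) (hb : ‖b‖ < 1) :
    ‖((b - a) ^ 2)⁻¹ - (a ^ 2)⁻¹ - 2 * b * (a ^ 3)⁻¹‖ ≤ ‖b‖ ^ 2 := by
  have hba : ‖b - a‖ = 1 := by
    rw [sub_eq_add_neg, norm_add_eq_max_of_norm_ne_norm (by rw [norm_neg, ha]; exact hb.ne),
      norm_neg, ha, max_eq_right hb.le]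
  have ha0 : a ≠ 0 := norm_ne_zero_iff.mp (by rw [ha]; exact one_ne_zero)
  have hba0 : b - a ≠ 0 := norm_ne_zero_iff.mp (by rw [hba]; exact one_ne_zero)
  have hnum : ‖3 * a + -2 * b‖ ≤ 1 := by
    refine norm_add_le_of_le ?_ (norm_mul_le_of_norm_le_one ?_ hb.le)
    · rw [norm_mul, ha, mul_one]; exact_mod_cast norm_natCast_le_one K 3
    · rw [norm_neg]; exact_mod_cast norm_natCast_le_one K 2
  have key : ((b - a) ^ 2)⁻¹ - (a ^ 2)⁻¹ - 2 * b * (a ^ 3)⁻¹ =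
      b ^ 2 * (3 * a + -2 * b) / (a ^ 3 * (b - a) ^ 2) := by
    field_simp
    ring
  rw [key, norm_div, norm_mul, norm_mul, norm_pow, norm_pow, norm_pow, ha, hba]
  simpa using mul_le_of_le_one_right (by positivity) hnum

end NormedField

namespace Padic

variable {p : ℕ} [hp : Fact p.Prime]

theorem norm_natCast_eq_one_of_pos_of_lt {k : ℕ} (h0 : 0 < k) (hk : k < p) :
    ‖(k : ℚ_[p])‖ = 1 :=
  norm_natCast_eq_one_iff.mpr ((Nat.Prime.coprime_iff_not_dvd hp.out).mpr
    (Nat.not_dvd_of_pos_of_lt h0 hk))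

theorem norm_two_eq_one (hp2 : p ≠ 2) : ‖(2 : ℚ_[p])‖ = 1 := by
  simpa using norm_natCast_eq_one_of_pos_of_lt (p := p) two_pos
    (lt_of_le_of_ne hp.out.two_le (Ne.symm hp2))

theorem norm_natCast_pow_sub_one_le {k : ℕ} (hk : ¬ p ∣ k) :
    ‖(k : ℚ_[p]) ^ (p - 1) - 1‖ ≤ (p : ℝ)⁻¹ := by
  have hcop : IsCoprime (k : ℤ) p := Nat.isCoprime_iff_coprime.mpr
    (Nat.coprime_comm.mp ((Nat.Prime.coprime_iff_not_dvd hp.out).mpr hk))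
  have hdvd := (Int.ModEq.pow_card_sub_one_eq_one hp.out hcop).symm.dvd
  simpa using (norm_int_le_pow_iff_dvd ((k : ℤ) ^ (p - 1) - 1) 1).mpr (by simpa using hdvd)

theorem norm_bernoulli_le_one {n : ℕ} (hn : n < p - 1) : ‖(bernoulli n : ℚ_[p])‖ ≤ 1 := by
  induction n using Nat.strong_induction_on with
  | _ n ih =>
  rcases n.eq_zero_or_pos with rfl | hpos
  · simp
  have hrec : ((n + 1 : ℕ) : ℚ_[p]) * bernoulli n =
      -∑ k ∈ range n, ((n + 1).choose k : ℚ_[p]) * bernoulli k := by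
    have h := sum_bernoulli (n + 1)
    rw [if_neg (by omega), sum_range_succ, Nat.choose_succ_self_right] at h
    have h' := congrArg (Rat.cast : ℚ → ℚ_[p]) h
    push_cast at h' ⊢
    linear_combination h'
  refine norm_le_of_norm_mul_le
    (norm_natCast_eq_one_of_pos_of_lt (p := p) (k := n + 1) (by omega) (by omega)) ?_
  rw [hrec, norm_neg]
  exact norm_sum_le_of_forall_le_of_nonneg zero_le_one fun k hk =>
    norm_mul_le_of_norm_le_one (norm_natCast_le_one _ _)
      (ih k (mem_range.mp hk) (by have := mem_range.mp hk; omega))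

theorem norm_coeff_bernoulli_le_one {n : ℕ} (hn : n < p - 1) (j : ℕ) :
    ‖(((Polynomial.bernoulli n).coeff j : ℚ) : ℚ_[p])‖ ≤ 1 := by
  rw [Polynomial.coeff_bernoulli]
  split_ifs
  · push_cast
    exact norm_mul_le_of_norm_le_one (norm_bernoulli_le_one (by omega)) (norm_natCast_le_one _ _)
  · simp

theorem norm_mul_sum_range_half_pow_sub_le {e : ℕ} (he : e + 2 < p) :
    ‖((e + 1 : ℕ) : ℚ_[p]) * ∑ k ∈ range ((p + 1) / 2), (k : ℚ_[p]) ^ e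
      - (2 * 2⁻¹ ^ (e + 1) - 2) * bernoulli (e + 1)‖ ≤ (p : ℝ)⁻¹ := by
  have hM : (((p + 1) / 2 : ℕ) : ℚ) = 2⁻¹ + p * 2⁻¹ := by
    obtain ⟨r, rfl⟩ := hp.out.odd_of_ne_two (by omega)
    rw [show (2 * r + 1 + 1) / 2 = r + 1 by omega]
    push_cast
    ring
  have key : ((e + 1 : ℕ) : ℚ) * ∑ k ∈ range ((p + 1) / 2), (k : ℚ) ^ e
      - (2 * 2⁻¹ ^ (e + 1) - 2) * bernoulli (e + 1) =
      (Polynomial.bernoulli (e + 1)).eval (2⁻¹ + (p : ℚ) * 2⁻¹) -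
        (Polynomial.bernoulli (e + 1)).eval 2⁻¹ := by
    rw [← hM, Nat.cast_add_one, Polynomial.sum_range_pow_eq_bernoulli_sub,
      Polynomial.bernoulli_eval_half]
    ring
  have hcast := congrArg (Rat.cast : ℚ → ℚ_[p]) key
  have hev (x : ℚ) : (((Polynomial.bernoulli (e + 1)).eval x : ℚ) : ℚ_[p]) =
      ((Polynomial.bernoulli (e + 1)).map (Rat.castHom ℚ_[p])).eval (x : ℚ_[p]) := by
    rw [Polynomial.eval_map]
    exact (Polynomial.eval₂_at_apply (Rat.castHom ℚ_[p]) x).symm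
  have h2 : ‖(2 : ℚ_[p])⁻¹‖ = 1 := by rw [norm_inv, norm_two_eq_one (by omega), inv_one]
  push_cast at hcast ⊢
  rw [hcast, hev, hev]
  push_cast
  have hb : ‖(p : ℚ_[p]) * 2⁻¹‖ = (p : ℝ)⁻¹ := by rw [norm_mul, h2, norm_p, mul_one]
  refine hb ▸ Polynomial.norm_eval_add_sub_eval_le (fun j => ?_) h2.le ?_
  · rw [Polynomial.coeff_map]
    exact norm_coeff_bernoulli_le_one (by omega) j
  · rw [hb]
    exact inv_le_one_of_one_le₀ (by exact_mod_cast hp.out.one_lt.le)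

theorem norm_harmonicPow_sub_two_mul_sub_le (hp2 : p ≠ 2) :
    ‖harmonicPow ℚ_[p] 2 (p - 1) - 2 * harmonicPow ℚ_[p] 2 ((p - 1) / 2)
      - 2 * p * harmonicPow ℚ_[p] 3 ((p - 1) / 2)‖ ≤ (p : ℝ)⁻¹ ^ 2 := by
  obtain ⟨m, hm⟩ := hp.out.odd_of_ne_two hp2
  rw [show (p - 1) / 2 = m by omega, show p - 1 = 2 * m by omega, harmonicPow, harmonicPow,
    harmonicPow, sum_Icc_two_mul_eq_sum_add_reflect, mul_sum, mul_sum, ← sum_sub_distrib,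
    ← sum_sub_distrib]
  refine norm_sum_le_of_forall_le_of_nonneg (by positivity) fun j hj => ?_
  obtain ⟨hj1, hjm⟩ := mem_Icc.mp hj
  have h := norm_inv_sub_sq_sub_le (b := (p : ℚ_[p]))
    (norm_natCast_eq_one_of_pos_of_lt (p := p) (k := j) hj1 (by omega)) norm_p_lt_one
  rw [norm_p] at h
  rw [show 2 * m + 1 - j = p - j by omega, Nat.cast_sub (by omega)]
  refine (congrArg norm ?_).trans_le h
  ring

theorem norm_harmonicPow_sub_half_sub_le (hp2 : p ≠ 2) :
    ‖harmonicPow ℚ_[p] 2 (p - 1) - 2⁻¹ * harmonicPow ℚ_[p] 2 ((p - 1) / 2)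
      - 4⁻¹ * p * harmonicPow ℚ_[p] 3 ((p - 1) / 2)‖ ≤ (p : ℝ)⁻¹ ^ 2 := by
  obtain ⟨m, hm⟩ := hp.out.odd_of_ne_two hp2
  rw [show (p - 1) / 2 = m by omega, show p - 1 = 2 * m by omega, harmonicPow, harmonicPow,
    harmonicPow, sum_Icc_two_mul_eq_sum_even_add_odd, mul_sum, mul_sum, ← sum_sub_distrib,
    ← sum_sub_distrib]
  refine norm_sum_le_of_forall_le_of_nonneg (by positivity) fun j hj => ?_
  obtain ⟨hj1, hjm⟩ := mem_Icc.mp hj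
  have h := norm_inv_sub_sq_sub_le (b := (p : ℚ_[p]))
    (norm_natCast_eq_one_of_pos_of_lt (p := p) (k := 2 * j) (by omega) (by omega)) norm_p_lt_one
  rw [norm_p] at h
  rw [show 2 * m + 1 - 2 * j = p - 2 * j by omega, Nat.cast_sub (by omega)]
  refine (congrArg norm ?_).trans_le h
  push_cast
  ring

theorem norm_two_mul_inv_two_pow_sub_eight_le (hp2 : p ≠ 2) :
    ‖(2 : ℚ_[p]) * 2⁻¹ ^ (p - 3) - 8‖ ≤ (p : ℝ)⁻¹ := by
  have h2 : ¬ p ∣ 2 := fun h => hp2 ((Nat.prime_dvd_prime_iff_eq hp.out Nat.prime_two).mp h)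
  have hfermat := norm_natCast_pow_sub_one_le (p := p) h2
  push_cast at hfermat
  have key : (2 : ℚ_[p]) * 2⁻¹ ^ (p - 3) - 8 = -8 * 2⁻¹ ^ (p - 1) * (2 ^ (p - 1) - 1) := by
    have hinv : (2 : ℚ_[p]) ^ (p - 3) * 2⁻¹ ^ (p - 3) = 1 := by rw [← mul_pow]; norm_num
    rw [show p - 1 = p - 3 + 2 by have := hp.out.two_le; omega]
    linear_combination 8 * hinv
  have h8 : ‖(-8 : ℚ_[p]) * 2⁻¹ ^ (p - 1)‖ ≤ 1 := by
    rw [norm_mul, norm_pow, norm_inv, norm_two_eq_one hp2]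
    simpa using norm_natCast_le_one ℚ_[p] 8
  rw [key]
  exact norm_mul_le_of_norm_le_one h8 hfermat

theorem norm_harmonicPow_three_add_two_mul_bernoulli_le (hp5 : 5 ≤ p) :
    ‖harmonicPow ℚ_[p] 3 ((p - 1) / 2) + 2 * bernoulli (p - 3)‖ ≤ (p : ℝ)⁻¹ := by
  set S := ∑ k ∈ range ((p + 1) / 2), (k : ℚ_[p]) ^ (p - 4) with hSdef
  have hS : S = ∑ k ∈ Icc 1 ((p - 1) / 2), (k : ℚ_[p]) ^ (p - 4) := by
    rw [hSdef, show range ((p + 1) / 2) = insert 0 (Icc 1 ((p - 1) / 2)) by ext; simp; omega,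
      sum_insert (by simp), Nat.cast_zero, zero_pow (by omega), zero_add]
  have hfermat : ‖harmonicPow ℚ_[p] 3 ((p - 1) / 2) - S‖ ≤ (p : ℝ)⁻¹ := by
    rw [hS, harmonicPow, ← sum_sub_distrib]
    refine norm_sum_le_of_forall_le_of_nonneg (by positivity) fun k hk => ?_
    obtain ⟨hk1, hkm⟩ := mem_Icc.mp hk
    rw [norm_inv_pow_three_sub_pow (norm_natCast_eq_one_of_pos_of_lt hk1 (by omega)),
      show p - 4 + 3 = p - 1 by omega]
    exact norm_natCast_pow_sub_one_le (Nat.not_dvd_of_pos_of_lt hk1 (by omega))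
  have hfaulhaber := norm_mul_sum_range_half_pow_sub_le (p := p) (e := p - 4) (by omega)
  rw [show p - 4 + 1 = p - 3 by omega] at hfaulhaber
  have hB : ‖(bernoulli (p - 3) : ℚ_[p])‖ ≤ 1 := norm_bernoulli_le_one (by omega)
  have hsum : ‖S + 2 * bernoulli (p - 3)‖ ≤ (p : ℝ)⁻¹ := by
    refine norm_le_of_norm_mul_le
      (norm_natCast_eq_one_of_pos_of_lt (p := p) (k := p - 3) (by omega) (by omega)) ?_
    have key : ((p - 3 : ℕ) : ℚ_[p]) * (S + 2 * bernoulli (p - 3)) =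
        (((p - 3 : ℕ) : ℚ_[p]) * S - (2 * 2⁻¹ ^ (p - 3) - 2) * bernoulli (p - 3))
          + ((2 * 2⁻¹ ^ (p - 3) - 8) * bernoulli (p - 3) + 2 * p * bernoulli (p - 3)) := by
      rw [Nat.cast_sub (by omega)]
      ring
    rw [key]
    refine norm_add_le_of_le hfaulhaber (norm_add_le_of_le ?_ ?_)
    · rw [mul_comm]
      exact norm_mul_le_of_norm_le_one hB (norm_two_mul_inv_two_pow_sub_eight_le (by omega))
    · rw [mul_comm]
      refine norm_mul_le_of_norm_le_one hB (norm_mul_le_of_norm_le_one ?_ norm_p.le)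
      exact_mod_cast norm_natCast_le_one ℚ_[p] 2
  rw [show harmonicPow ℚ_[p] 3 ((p - 1) / 2) + 2 * bernoulli (p - 3)
      = (harmonicPow ℚ_[p] 3 ((p - 1) / 2) - S) + (S + 2 * bernoulli (p - 3)) by ring]
  exact norm_add_le_of_le hfermat hsum

theorem norm_harmonicPow_two_sub_mul_bernoulli_le (hp5 : 5 ≤ p) :
    ‖harmonicPow ℚ_[p] 2 ((p - 1) / 2) - 7 / 3 * p * bernoulli (p - 3)‖ ≤ (p : ℝ)⁻¹ ^ 2 := by
  have hp2 : p ≠ 2 := by omega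
  have h6 : ‖(6 : ℚ_[p])‖ = 1 := by
    rw [show (6 : ℚ_[p]) = 2 * 3 by norm_num, norm_mul, norm_two_eq_one hp2, one_mul]
    simpa using norm_natCast_eq_one_of_pos_of_lt (p := p) (k := 3) (by norm_num) (by omega)
  have h7 : ‖(-7 : ℚ_[p]) * (harmonicPow ℚ_[p] 3 ((p - 1) / 2) + 2 * bernoulli (p - 3))‖
      ≤ (p : ℝ)⁻¹ := norm_mul_le_of_norm_le_one (by simpa using norm_natCast_le_one ℚ_[p] 7)
    (norm_harmonicPow_three_add_two_mul_bernoulli_le hp5)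
  refine norm_le_of_norm_mul_le h6 ?_
  set F := harmonicPow ℚ_[p] 2 (p - 1)
  set H := harmonicPow ℚ_[p] 2 ((p - 1) / 2)
  set T := harmonicPow ℚ_[p] 3 ((p - 1) / 2)
  set B := (bernoulli (p - 3) : ℚ_[p])
  rw [show 6 * (H - 7 / 3 * p * B) = -4 * (F - 2 * H - 2 * p * T)
      + 4 * (F - 2⁻¹ * H - 4⁻¹ * p * T) + p * (-7 * (T + 2 * B)) by ring]
  refine norm_add_le_of_le (norm_add_le_of_le ?_ ?_) ?_
  · exact norm_mul_le_of_norm_le_one (by simpa using norm_natCast_le_one ℚ_[p] 4)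
      (norm_harmonicPow_sub_two_mul_sub_le hp2)
  · exact norm_mul_le_of_norm_le_one (by simpa using norm_natCast_le_one ℚ_[p] 4)
      (norm_harmonicPow_sub_half_sub_le hp2)
  · rw [norm_mul, norm_p, sq]
    gcongr

end Padic

theorem ratCongr_of_norm_sub_le {p : ℕ} [hp : Fact p.Prime] {A B : ℚ} {e : ℕ} (he : e ≠ 0)
    (h : ‖((A - B : ℚ) : ℚ_[p])‖ ≤ (p : ℝ)⁻¹ ^ e) : ratCongr A B p e := by
  set q := A - B
  have hnum : (p : ℤ) ^ e ∣ q.num := by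
    rw [← Padic.norm_int_le_pow_iff_dvd, ← Rat.cast_intCast, ← Rat.mul_den_eq_num, Rat.cast_mul,
      mul_comm, zpow_neg, zpow_natCast, ← inv_pow]
    exact norm_mul_le_of_norm_le_one (by simpa using norm_natCast_le_one ℚ_[p] q.den) h
  have hden : ¬ (p : ℤ) ∣ q.den := fun hd => hp.out.one_lt.ne' <|
    Nat.eq_one_of_dvd_coprimes q.reduced
      (Int.natCast_dvd.mp ((dvd_pow_self _ he).trans hnum)) (Int.natCast_dvd_natCast.mp hd)
  obtain ⟨a, ha⟩ := hnum
  refine ⟨a, q.den, hden, ?_⟩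
  change q * ((q.den : ℤ) : ℚ) = _
  rw [Int.cast_natCast, Rat.mul_den_eq_num]
  exact_mod_cast ha

/-- Z.-H. Sun: for primes `p ≥ 5`,
`H^{(2)}_{(p-1)/2} ≡ (7/3) p B_{p-3} (mod p^2)`. -/
theorem stmt14 (p : ℕ) (hp : p.Prime) (hp5 : 5 ≤ p) :
    ratCongr (H2 ((p - 1) / 2)) (7 / 3 * (p : ℚ) * bernoulli (p - 3)) p 2 := by
  have : Fact p.Prime := ⟨hp⟩
  refine ratCongr_of_norm_sub_le two_ne_zero ?_
  have hH2 : ((H2 ((p - 1) / 2) : ℚ) : ℚ_[p]) = harmonicPow ℚ_[p] 2 ((p - 1) / 2) := by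
    simp [H2, harmonicPow]
  push_cast [hH2]
  exact Padic.norm_harmonicPow_two_sub_mul_bernoulli_le hp5
end
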